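/- (Matroid DLP duality) Let M be a matroid on a set E of size n with rank k. Define k_j(M) = max{h⁰(M,J) : J ⊆ E, |J| = j}, where h⁰(M,J) = r(E) − r(E\J). Then for every j with 1 ≤ j ≤ n, k_{n−j}(M*) = k_j(M) + n − j − k. -/

import Mathlib

/-- The rank of a subset `J`: the maximal cardinality of an independent subset of `J`. -/
def matroidRank {α : Type*} [DecidableEq α] (Indep : Finset α → Prop)
    [DecidablePred Indep] (J : Finset α) : ℕ :=
  (J.powerset.filter Indep).sup Finset.card

/-- `h⁰(M, J) = r(E) - r(E \ J)`. -/
def h0Matroid {α : Type*} [DecidableEq α] (E : Finset α) (Indep : Finset α → Prop)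
    [DecidablePred Indep] (J : Finset α) : ℕ :=
  matroidRank Indep E - matroidRank Indep (E \ J)

/-- The rank function of the dual matroid: `r*(S) = |S| + r(E \ S) - r(E)`. -/
def dualMatroidRank {α : Type*} [DecidableEq α] (E : Finset α) (Indep : Finset α → Prop)
    [DecidablePred Indep] (S : Finset α) : ℕ :=
  S.card + matroidRank Indep (E \ S) - matroidRank Indep E

/-- `h⁰(M*, J) = r*(E) - r*(E \ J)`. -/
def h0DualMatroid {α : Type*} [DecidableEq α] (E : Finset α) (Indep : Finset α → Prop)
    [DecidablePred Indep] (J : Finset α) : ℕ :=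
  dualMatroidRank E Indep E - dualMatroidRank E Indep (E \ J)

/-- `k_j = max { h⁰(J) : J ⊆ E, |J| = j }`, the dimension/length profile. -/
def matroidDLP {α : Type*} [DecidableEq α] (E : Finset α) (h0 : Finset α → ℕ)
    (j : ℕ) : ℕ :=
  ((E.powerset).filter (fun J => J.card = j)).sup h0

/-!
Both profiles are governed by the least rank `m` of an `(n - j)`-subset of `E`. For `J ⊆ E`,
`r(E) ≤ |E \ J| + r(J)` keeps the truncated subtractions exact, so `h⁰(M*, J) = |J| - r(J)` and
`k_{n-j}(M*) = (n - j) - m`; and `J ↦ E \ J` matches the `j`-subsets with the `(n - j)`-subsets,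
so `k_j(M) = max_{|J| = n - j} (k - r(J)) = k - m`.
-/

section Rank

variable {α : Type*} [DecidableEq α] {Indep : Finset α → Prop} [DecidablePred Indep]

theorem matroidRank_le_card (J : Finset α) : matroidRank Indep J ≤ J.card :=
  Finset.sup_le fun _ hI =>
    Finset.card_le_card (Finset.mem_powerset.mp (Finset.mem_filter.mp hI).1)

theorem matroidRank_mono {A B : Finset α} (h : A ⊆ B) :
    matroidRank Indep A ≤ matroidRank Indep B :=
  Finset.sup_mono (Finset.filter_subset_filter _ (Finset.powerset_mono.mpr h))

theorem matroidRank_empty : matroidRank Indep (∅ : Finset α) = 0 :=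
  Nat.le_zero.mp (matroidRank_le_card ∅)

theorem matroidRank_le_card_add_matroidRank_sdiff
    (h_mono : ∀ I I' : Finset α, I' ⊆ I → Indep I → Indep I') (E S : Finset α) :
    matroidRank Indep E ≤ S.card + matroidRank Indep (E \ S) := by
  refine Finset.sup_le fun I hI => ?_
  obtain ⟨hIE, hI⟩ := Finset.mem_filter.mp hI
  have h_sdiff : (I \ S).card ≤ matroidRank Indep (E \ S) :=
    Finset.le_sup (f := Finset.card) (Finset.mem_filter.mpr
      ⟨Finset.mem_powerset.mpr (Finset.sdiff_subset_sdiff (Finset.mem_powerset.mp hIE) le_rfl),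
        h_mono I (I \ S) Finset.sdiff_subset hI⟩)
  have h_inter : (I ∩ S).card ≤ S.card := Finset.card_le_card Finset.inter_subset_right
  have := Finset.card_inter_add_card_sdiff I S
  omega

theorem h0DualMatroid_eq_card_sub_matroidRank
    (h_mono : ∀ I I' : Finset α, I' ⊆ I → Indep I → Indep I') {E J : Finset α} (hJ : J ⊆ E) :
    h0DualMatroid E Indep J = J.card - matroidRank Indep J := by
  have hEJ : E \ (E \ J) = J := Finset.sdiff_sdiff_eq_self hJ
  have h_lower := matroidRank_le_card_add_matroidRank_sdiff h_mono E (E \ J)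
  have h_card := Finset.card_sdiff_add_card_eq_card hJ
  rw [hEJ] at h_lower
  unfold h0DualMatroid dualMatroidRank
  rw [Finset.sdiff_self, matroidRank_empty, hEJ]
  omega

end Rank

section Profile

variable {α : Type*} [DecidableEq α]

theorem matroidDLP_congr {E : Finset α} {f g : Finset α → ℕ} {j : ℕ}
    (h : ∀ J ∈ E.powersetCard j, f J = g J) : matroidDLP E f j = matroidDLP E g j :=
  Finset.sup_congr rfl fun J hJ => h J (Finset.powersetCard_eq_filter ▸ hJ)

theorem matroidDLP_comp_sdiff (E : Finset α) (f : Finset α → ℕ) {j : ℕ} (hj : j ≤ E.card) :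
    matroidDLP E (fun S => f (E \ S)) j = matroidDLP E f (E.card - j) := by
  unfold matroidDLP
  simp only [← Finset.powersetCard_eq_filter]
  apply le_antisymm
  · refine Finset.sup_le fun S hS => Finset.le_sup (f := f) ?_
    obtain ⟨hSE, hSc⟩ := Finset.mem_powersetCard.mp hS
    exact Finset.mem_powersetCard.mpr
      ⟨Finset.sdiff_subset, by rw [Finset.card_sdiff_of_subset hSE, hSc]⟩
  · refine Finset.sup_le fun J hJ => ?_
    obtain ⟨hJE, hJc⟩ := Finset.mem_powersetCard.mp hJ
    have hmem : E \ J ∈ E.powersetCard j := Finset.mem_powersetCard.mpr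
      ⟨Finset.sdiff_subset, by rw [Finset.card_sdiff_of_subset hJE, hJc]; omega⟩
    simpa only [Finset.sdiff_sdiff_eq_self hJE] using
      Finset.le_sup (f := fun S => f (E \ S)) hmem

theorem matroidDLP_tsub_eq_of_isMin {E J₀ : Finset α} {f : Finset α → ℕ} {j : ℕ} (c : ℕ)
    (hJ₀ : J₀ ∈ E.powersetCard j) (hmin : ∀ J ∈ E.powersetCard j, f J₀ ≤ f J) :
    matroidDLP E (fun J => c - f J) j = c - f J₀ := by
  unfold matroidDLP
  rw [← Finset.powersetCard_eq_filter]
  exact le_antisymm (Finset.sup_le fun J hJ => Nat.sub_le_sub_left (hmin J hJ) c)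
    (Finset.le_sup (f := fun J => c - f J) hJ₀)

end Profile

theorem matroid_dlp_duality_general {α : Type*} [DecidableEq α]
    (E : Finset α) (Indep : Finset α → Prop) [DecidablePred Indep]
    (h_mono : ∀ I I' : Finset α, I' ⊆ I → Indep I → Indep I')
    (n k : ℕ) (hn : E.card = n) (hk : matroidRank Indep E = k)
    (j : ℕ) (hjn : j ≤ n) :
    (matroidDLP E (h0DualMatroid E Indep) (n - j) : ℤ)
      = (matroidDLP E (h0Matroid E Indep) j : ℤ) + n - j - k := by
  subst hn hk
  obtain ⟨J₀, hJ₀, hmin⟩ := (E.powersetCard (E.card - j)).exists_min_image (matroidRank Indep)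
    (Finset.powersetCard_nonempty.mpr (Nat.sub_le _ _))
  obtain ⟨hJ₀E, hJ₀c⟩ := Finset.mem_powersetCard.mp hJ₀
  have h_dual : matroidDLP E (h0DualMatroid E Indep) (E.card - j)
      = (E.card - j) - matroidRank Indep J₀ := by
    rw [← matroidDLP_tsub_eq_of_isMin _ hJ₀ hmin]
    refine matroidDLP_congr fun J hJ => ?_
    obtain ⟨hJE, hJc⟩ := Finset.mem_powersetCard.mp hJ
    rw [h0DualMatroid_eq_card_sub_matroidRank h_mono hJE, hJc]
  have h_primal : matroidDLP E (h0Matroid E Indep) j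
      = matroidRank Indep E - matroidRank Indep J₀ :=
    (matroidDLP_comp_sdiff E (fun J => matroidRank Indep E - matroidRank Indep J) hjn).trans
      (matroidDLP_tsub_eq_of_isMin _ hJ₀ hmin)
  have h_le_card := matroidRank_le_card (Indep := Indep) J₀
  have h_le_rank := matroidRank_mono (Indep := Indep) hJ₀E
  rw [h_dual, h_primal]
  omega

/-- Matroid DLP duality: `k_{n-j}(M*) = k_j(M) + n - j - k` for `1 ≤ j ≤ n`. -/
theorem matroid_dlp_duality {α : Type*} [DecidableEq α]
    (E : Finset α) (Indep : Finset α → Prop) [DecidablePred Indep]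
    (h_subset_ground : ∀ I, Indep I → I ⊆ E)
    (h_empty : Indep ∅)
    (h_mono : ∀ I I' : Finset α, I' ⊆ I → Indep I → Indep I')
    (h_exch : ∀ I₁ I₂ : Finset α, Indep I₁ → Indep I₂ → I₁.card < I₂.card →
      ∃ e ∈ I₂ \ I₁, Indep (insert e I₁))
    (n k : ℕ) (hn : E.card = n) (hk : matroidRank Indep E = k)
    (j : ℕ) (hj1 : 1 ≤ j) (hjn : j ≤ n) :
    (matroidDLP E (h0DualMatroid E Indep) (n - j) : ℤ)
      = (matroidDLP E (h0Matroid E Indep) j : ℤ) + n - j - k :=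
  matroid_dlp_duality_general E Indep h_mono n k hn hk j hjn
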